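/- Let γ ≥ 1 be a natural number and α ∈ [0,1). Let X be the integer-valued random variable giving the number of tokens generated in one speculative-decoding run, with distribution P(X = k) = α^{k−1}·(1−α) for 1 ≤ k ≤ γ and P(X = γ+1) = α^{γ}. Then this is a probability distribution (the probabilities sum to 1) and the expected value of X equals (1 − α^{γ+1})/(1 − α) = Σ_{k=0}^{γ} α^{k}. -/
import Mathlib


open Finset

lemma spec_aux1 (α : ℝ) (n : ℕ) :
    ∑ k ∈ Finset.Icc 1 n, α ^ (k - 1) * (1 - α) + α ^ n = 1 := by
  induction n with
  | zero => simp
  | succ n ih =>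
      rw [Finset.sum_Icc_succ_top (by omega)]
      have : (n + 1 : ℕ) - 1 = n := by omega
      rw [this]
      ring_nf
      ring_nf at ih
      linarith

lemma spec_aux2 (α : ℝ) (n : ℕ) :
    ∑ k ∈ Finset.Icc 1 n, (k : ℝ) * (α ^ (k - 1) * (1 - α)) + (n + 1 : ℝ) * α ^ n
      = ∑ k ∈ Finset.range (n + 1), α ^ k := by
  induction n with
  | zero => simp
  | succ n ih =>
      rw [Finset.sum_Icc_succ_top (by omega), Finset.sum_range_succ, ← ih]
      have : (n + 1 : ℕ) - 1 = n := by omega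
      rw [this]
      push_cast
      ring

/-- The number of tokens generated per speculative decoding run, namely the
random variable `X` with `P(X = k) = α^{k−1}·(1−α)` for `1 ≤ k ≤ γ` and
`P(X = γ+1) = α^γ`, is a probability distribution, and its expected value is
`(1 − α^{γ+1})/(1 − α) = Σ_{k=0}^{γ} α^k`. -/
theorem speculative_decoding_expected_tokens
    (γ : ℕ) (hγ : 1 ≤ γ)
    (α : ℝ) (hα0 : 0 ≤ α) (hα1 : α < 1)
    (P : ℕ → ℝ)
    (hPmid : ∀ k, 1 ≤ k → k ≤ γ → P k = α ^ (k - 1) * (1 - α))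
    (hPtop : P (γ + 1) = α ^ γ)
    (hPzero : ∀ k, k = 0 ∨ γ + 1 < k → P k = 0) :
    (∑ k ∈ Finset.Icc 1 (γ + 1), P k = 1) ∧
    (∑ k ∈ Finset.Icc 1 (γ + 1), (k : ℝ) * P k = (1 - α ^ (γ + 1)) / (1 - α)) ∧
    ((1 - α ^ (γ + 1)) / (1 - α) = ∑ k ∈ Finset.range (γ + 1), α ^ k) := by
  have hne : (1 - α) ≠ 0 := by linarith
  have h3 : (1 - α ^ (γ + 1)) / (1 - α) = ∑ k ∈ Finset.range (γ + 1), α ^ k := by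
    rw [geom_sum_eq (by intro h; rw [h] at hα1; exact lt_irrefl 1 hα1)]
    rw [div_eq_div_iff hne (by intro h; apply hne; linarith)]
    ring
  refine ⟨?_, ?_, h3⟩
  · rw [Finset.sum_Icc_succ_top (by omega), hPtop,
      Finset.sum_congr rfl (fun k hk => hPmid k (Finset.mem_Icc.mp hk).1 (Finset.mem_Icc.mp hk).2)]
    exact spec_aux1 α γ
  · rw [Finset.sum_Icc_succ_top (by omega), hPtop, h3,
      Finset.sum_congr rfl (fun k hk => by
        rw [hPmid k (Finset.mem_Icc.mp hk).1 (Finset.mem_Icc.mp hk).2])]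
    have := spec_aux2 α γ
    push_cast
    push_cast at this
    linarith
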